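/- arXiv:1701.05277 — 2 statements merged into one kernel-verified Lean document; each statement's English description precedes it below -/
import Mathlib

section
/- Let w1, w2 be words of length n. Then Young's character satisfies Y(r1, r2) ∈ {−1, 0, 1} for all r1 ∈ R(w1) and r2 ∈ R(w2); if there exist distinct positions i, j ∈ Fin n with r1(i) = r1(j) and r2(i) = r2(j) (a repeated column), then Y(r1, r2) = 0. If moreover w1 and w2 are complementary, then Y(r1, r2) ≠ 0 if and only if the pairs (r1(i), r2(i)) for i ∈ Fin n are pairwise distinct. -/
/-- The action of a permutation on a word: `σ · w = w ∘ σ⁻¹`. -/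
def wact {n : ℕ} (σ : Equiv.Perm (Fin n)) (w : Fin n → ℕ) : Fin n → ℕ :=
  w ∘ σ.symm

/-- `r` is a rearrangement of `w`. -/
def IsRearr {n : ℕ} (w r : Fin n → ℕ) : Prop :=
  ∃ σ : Equiv.Perm (Fin n), wact σ w = r

/-- The type of rearrangements of a word `w`. -/
abbrev Rearr {n : ℕ} (w : Fin n → ℕ) : Type :=
  {r : Fin n → ℕ // IsRearr w r}

theorem wact_wact {n : ℕ} (σ τ : Equiv.Perm (Fin n)) (w : Fin n → ℕ) :
    wact σ (wact τ w) = wact (σ * τ) w := rfl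

/-- The action of a permutation on the type of rearrangements of `w`. -/
def ract {n : ℕ} {w : Fin n → ℕ} (σ : Equiv.Perm (Fin n)) (r : Rearr w) : Rearr w :=
  ⟨wact σ r.1, by
    obtain ⟨τ, hτ⟩ := r.2
    exact ⟨σ * τ, by rw [← hτ, wact_wact]⟩⟩

instance {n : ℕ} (w : Fin n → ℕ) : Finite (Rearr w) :=
  Finite.of_surjective (fun σ : Equiv.Perm (Fin n) => (⟨wact σ w, σ, rfl⟩ : Rearr w))
    (fun r => by obtain ⟨r, σ, hσ⟩ := r; exact ⟨σ, Subtype.ext hσ⟩)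

noncomputable instance {n : ℕ} (w : Fin n → ℕ) : Fintype (Rearr w) :=
  Fintype.ofFinite _

/-- Young's character `Y(r1, r2) = Σ sign σ` over all `σ` with `σ·w1 = r1` and `σ·w2 = r2`. -/
def youngChar {n : ℕ} (w1 w2 : Fin n → ℕ) (r1 r2 : Fin n → ℕ) : ℤ :=
  ∑ σ : Equiv.Perm (Fin n),
    if wact σ w1 = r1 ∧ wact σ w2 = r2 then (Equiv.Perm.sign σ : ℤ) else 0

/-- A pair of words has trivial (diagonal) stabilizer. -/
def FreePair {n : ℕ} (p : (Fin n → ℕ) × (Fin n → ℕ)) : Prop :=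
  ∀ σ : Equiv.Perm (Fin n), wact σ p.1 = p.1 → wact σ p.2 = p.2 → σ = 1

/-- The diagonal action on `R(w1) × R(w2)` has exactly one free orbit. -/
def HaveComplRearr {n : ℕ} (w1 w2 : Fin n → ℕ) : Prop :=
  (∃ p : (Fin n → ℕ) × (Fin n → ℕ), IsRearr w1 p.1 ∧ IsRearr w2 p.2 ∧ FreePair p) ∧
  ∀ p q : (Fin n → ℕ) × (Fin n → ℕ),
    IsRearr w1 p.1 → IsRearr w2 p.2 → FreePair p →
    IsRearr w1 q.1 → IsRearr w2 q.2 → FreePair q →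
    ∃ σ : Equiv.Perm (Fin n), wact σ p.1 = q.1 ∧ wact σ p.2 = q.2

/-- `w1, w2` are complementary: there is a unique free orbit and `(w1, w2)` lies in it. -/
def Complementary {n : ℕ} (w1 w2 : Fin n → ℕ) : Prop :=
  HaveComplRearr w1 w2 ∧ FreePair (w1, w2)

/-- A column of the Specht matrix, as a complex vector indexed by `R(w1)`. -/
noncomputable def spechtCol {n : ℕ} (w1 w2 : Fin n → ℕ) (r2 : Rearr w2) : Rearr w1 → ℂ :=
  fun r1 => (youngChar w1 w2 r1.1 r2.1 : ℂ)

/-- The Specht module: the span of the columns of the Specht matrix. -/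
noncomputable def SpechtModule {n : ℕ} (w1 w2 : Fin n → ℕ) : Submodule ℂ (Rearr w1 → ℂ) :=
  Submodule.span ℂ (Set.range (spechtCol w1 w2))

/-- A column of the real Specht matrix. -/
noncomputable def spechtColR {n : ℕ} (w1 w2 : Fin n → ℕ) (r2 : Rearr w2) : Rearr w1 → ℝ :=
  fun r1 => (youngChar w1 w2 r1.1 r2.1 : ℝ)

/-- The Specht polytope: the convex hull of the columns of the real Specht matrix. -/
noncomputable def SpechtPolytope {n : ℕ} (w1 w2 : Fin n → ℕ) : Set (Rearr w1 → ℝ) :=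
  convexHull ℝ (Set.range (spechtColR w1 w2))

/-- The `S_n`-action on complex-valued functions on `R(w)`: `(σ·f)(r) = f(σ⁻¹·r)`. -/
def factC {n : ℕ} {w : Fin n → ℕ} (σ : Equiv.Perm (Fin n)) (f : Rearr w → ℂ) :
    Rearr w → ℂ :=
  fun r => f (ract σ⁻¹ r)

/-- A weakly decreasing list of positive integers (a partition shape). -/
def SortedPartList (l : List ℕ) : Prop :=
  l.Pairwise (· ≥ ·) ∧ ∀ x ∈ l, 0 < x

/-- The multiset of letter multiplicities of a word. -/
def multMultiset {n : ℕ} (w : Fin n → ℕ) : Multiset ℕ :=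
  (Finset.image w Finset.univ).val.map
    (fun v => (Finset.univ.filter (fun i => w i = v)).card)

/-- The decreasingly sorted letter multiplicities of `w` are given by the list `l`. -/
def HasMultiplicities {n : ℕ} (w : Fin n → ℕ) (l : List ℕ) : Prop :=
  SortedPartList l ∧ (l : Multiset ℕ) = multMultiset w

/-- The conjugate partition, as a list: `λ*_i = #{k : λ_k ≥ i}`. -/
def conjList (l : List ℕ) : List ℕ :=
  (List.range (l.getD 0 0)).map (fun j => (l.filter (fun x => j + 1 ≤ x)).length)

/-- The complementary pair `(w1, w2)` corresponds to the partition `l`. -/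
def CorrespondsTo {n : ℕ} (w1 w2 : Fin n → ℕ) (l : List ℕ) : Prop :=
  HasMultiplicities w1 l ∧ HasMultiplicities w2 (conjList l)

/-!
The permutations carrying `(w1, w2)` to `(r1, r2)` form either the empty set or a coset
`σ₀ · Stab(w1, w2)`. If the joint stabilizer is trivial, Young's character is `sign σ₀`.
Otherwise `(w1, w2)`, hence also `(r1, r2)`, has a repeated column; the transposition of
the two equal columns is an odd permutation fixing `(r1, r2)`, and left multiplication by it
is a sign-reversing bijection on the summation range, so the character vanishes. Injectivity
of the columns of `(r1, r2)` is exactly freeness of the pair, so for complementary words it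
places `(r1, r2)` in the orbit of `(w1, w2)`.
-/

section

variable {n : ℕ}

lemma wact_one (w : Fin n → ℕ) : wact 1 w = w := rfl

lemma wact_injective (σ : Equiv.Perm (Fin n)) : Function.Injective (wact σ) :=
  fun a b h => funext fun x => by simpa [wact] using congrFun h (σ x)

lemma wact_mul_eq_iff {τ : Equiv.Perm (Fin n)} {r : Fin n → ℕ} (hr : wact τ r = r)
    (σ : Equiv.Perm (Fin n)) (w : Fin n → ℕ) : wact (τ * σ) w = r ↔ wact σ w = r := by
  conv_lhs => rw [← wact_wact, ← hr]
  exact (wact_injective τ).eq_iff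

lemma wact_swap_of_eq {r : Fin n → ℕ} {i j : Fin n} (h : r i = r j) :
    wact (Equiv.swap i j) r = r := by
  funext x
  simp only [wact, Function.comp_apply, Equiv.symm_swap, Equiv.swap_apply_def]
  split_ifs with hi hj
  · rw [hi, h]
  · rw [hj, h]
  · rfl

lemma freePair_iff_injective (r1 r2 : Fin n → ℕ) :
    FreePair (r1, r2) ↔ Function.Injective fun i => (r1 i, r2 i) := by
  constructor
  · intro hfree i j hij
    by_contra hne
    simp only [Prod.mk.injEq] at hij
    have := hfree (Equiv.swap i j) (wact_swap_of_eq hij.1) (wact_swap_of_eq hij.2)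
    exact hne (Equiv.swap_eq_one_iff.mp this)
  · intro hinj σ h1 h2
    rw [← inv_eq_one]
    ext x
    exact congrArg Fin.val <| hinj <| Prod.ext (congrFun h1 x) (congrFun h2 x)

lemma injective_columns_wact (σ : Equiv.Perm (Fin n)) (w1 w2 : Fin n → ℕ) :
    (Function.Injective fun i => (wact σ w1 i, wact σ w2 i)) ↔
      Function.Injective fun i => (w1 i, w2 i) :=
  Function.Injective.of_comp_iff' (fun i => (w1 i, w2 i)) σ.symm.bijective

lemma youngChar_eq_zero_of_odd_stabilizer (w1 w2 : Fin n → ℕ) {r1 r2 : Fin n → ℕ}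
    {τ : Equiv.Perm (Fin n)} (hτ : Equiv.Perm.sign τ = -1)
    (h1 : wact τ r1 = r1) (h2 : wact τ r2 = r2) :
    youngChar w1 w2 r1 r2 = 0 := by
  have : youngChar w1 w2 r1 r2 = -youngChar w1 w2 r1 r2 := by
    unfold youngChar
    rw [← Finset.sum_neg_distrib]
    refine Fintype.sum_equiv (Equiv.mulLeft τ) _ _ fun σ => ?_
    simp only [Equiv.coe_mulLeft, wact_mul_eq_iff h1, wact_mul_eq_iff h2, map_mul, hτ]
    split_ifs <;> simp
  omega

lemma youngChar_eq_zero_of_not_injective (w1 w2 : Fin n → ℕ) {r1 r2 : Fin n → ℕ}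
    (h : ¬Function.Injective fun i => (r1 i, r2 i)) :
    youngChar w1 w2 r1 r2 = 0 := by
  obtain ⟨i, j, hij, hne⟩ := Function.not_injective_iff.mp h
  simp only [Prod.mk.injEq] at hij
  exact youngChar_eq_zero_of_odd_stabilizer w1 w2 (Equiv.Perm.sign_swap hne)
    (wact_swap_of_eq hij.1) (wact_swap_of_eq hij.2)

lemma youngChar_eq_sign {w1 w2 r1 r2 : Fin n → ℕ} (hfree : FreePair (w1, w2))
    {σ₀ : Equiv.Perm (Fin n)} (h1 : wact σ₀ w1 = r1) (h2 : wact σ₀ w2 = r2) :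
    youngChar w1 w2 r1 r2 = Equiv.Perm.sign σ₀ := by
  unfold youngChar
  rw [Fintype.sum_eq_single σ₀ fun σ hσ => if_neg ?_, if_pos ⟨h1, h2⟩]
  rintro ⟨hσ1, hσ2⟩
  have fixes : ∀ {w r : Fin n → ℕ}, wact σ w = r → wact σ₀ w = r → wact (σ₀⁻¹ * σ) w = w :=
    fun hw hw₀ => wact_injective σ₀ (by rw [wact_wact, mul_inv_cancel_left, hw, hw₀])
  exact hσ (inv_mul_eq_one.mp (hfree _ (fixes hσ1 h1) (fixes hσ2 h2))).symm

lemma youngChar_mem (w1 w2 r1 r2 : Fin n → ℕ) :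
    youngChar w1 w2 r1 r2 ∈ ({-1, 0, 1} : Set ℤ) := by
  by_cases hσ : ∃ σ : Equiv.Perm (Fin n), wact σ w1 = r1 ∧ wact σ w2 = r2
  · obtain ⟨σ₀, h1, h2⟩ := hσ
    by_cases hfree : FreePair (w1, w2)
    · rw [youngChar_eq_sign hfree h1 h2]
      rcases Int.units_eq_one_or (Equiv.Perm.sign σ₀) with h | h <;> simp [h]
    · rw [freePair_iff_injective, ← injective_columns_wact σ₀, h1, h2] at hfree
      simp [youngChar_eq_zero_of_not_injective w1 w2 hfree]
  · push Not at hσ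
    have : youngChar w1 w2 r1 r2 = 0 :=
      Finset.sum_eq_zero fun σ _ => if_neg fun h => hσ σ h.1 h.2
    simp [this]

end

/-- Young's character takes values in `{-1, 0, 1}`; it vanishes on pairs
with a repeated column; and for complementary words it is nonzero exactly when all
columns are distinct. -/
theorem specht_stmt_3 {n : ℕ} (w1 w2 : Fin n → ℕ) (r1 r2 : Fin n → ℕ)
    (h1 : IsRearr w1 r1) (h2 : IsRearr w2 r2) :
    youngChar w1 w2 r1 r2 ∈ ({-1, 0, 1} : Set ℤ) ∧
    ((∃ i j : Fin n, i ≠ j ∧ r1 i = r1 j ∧ r2 i = r2 j) → youngChar w1 w2 r1 r2 = 0) ∧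
    (Complementary w1 w2 →
      (youngChar w1 w2 r1 r2 ≠ 0 ↔ Function.Injective fun i => (r1 i, r2 i))) := by
  refine ⟨youngChar_mem w1 w2 r1 r2, ?_, ?_⟩
  · rintro ⟨i, j, hij, hr1, hr2⟩
    refine youngChar_eq_zero_of_not_injective w1 w2 fun hinj => hij (hinj ?_)
    simp [hr1, hr2]
  · rintro ⟨⟨-, hunique⟩, hfree⟩
    refine ⟨not_imp_comm.mp (youngChar_eq_zero_of_not_injective w1 w2), fun hinj => ?_⟩
    obtain ⟨σ₀, hσ1, hσ2⟩ := hunique (w1, w2) (r1, r2) ⟨1, wact_one w1⟩ ⟨1, wact_one w2⟩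
      hfree h1 h2 ((freePair_iff_injective r1 r2).mpr hinj)
    rw [youngChar_eq_sign hfree hσ1 hσ2]
    exact Units.ne_zero _
end

section
/- Let λ be a partition of n and (w1, w2) a complementary pair of words corresponding to λ, and let μ = λ* be the conjugate partition. Every column of the Specht matrix is nonzero, and there exist two distinct rearrangements r ≠ r' in R(w2) whose columns v_r and v_{r'} are ℂ-linearly dependent (equivalently, the Specht matroid M(λ) has a two-element circuit) if and only if μ_i = μ_{i+1} for some i with 1 ≤ i < λ_1, i.e., if and only if the diagram of λ has two columns of the same size. -/
/-! Write `(w1 p, w2 p)` for the cell of position `p`: a free pair puts distinct positions in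
distinct cells, the letters of `w1` index rows and those of `w2` columns. As the column lengths
are conjugate to the row lengths, counting the cells in the longest columns shows that the row
sets of the columns are nested: a row meeting a column meets every column at least as long.

`Y(r1, r2)` is `sign σ` on the free orbit `(r1, r2) = σ · (w1, w2)` and `0` off it, so no column
vanishes, and dependent columns have equal supports. Two positions carry the same letter of `r`
exactly when no `σ` with `σ · w2 = r` puts them in the same row (nestedness), so the support of
`v_r` knows which positions share a letter of `r`; when the column lengths are distinct it then
determines `r`. Conversely, columns `a ≠ b` of equal length meet the same rows, so exchanging the
cells `(j, a)` and `(j, b)` is a permutation fixing `w1` and relabelling `w2`, which turns `v_{w2}`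
into `± v_{swap a b ∘ w2}`. -/

open Finset Function Equiv Equiv.Perm

theorem support_eq_of_not_linearIndependent {K ι : Type*} [Field K] {f g : ι → K}
    (hf : f ≠ 0) (hg : g ≠ 0) (h : ¬ LinearIndependent K ![f, g]) : support f = support g := by
  rw [linearIndependent_fin2] at h
  simp only [Matrix.cons_val_one, Matrix.cons_val_zero, not_and, not_forall, not_not] at h
  obtain ⟨a, rfl⟩ := h hg
  exact support_const_smul_of_ne_zero a g (by rintro rfl; simp at hf)

theorem not_linearIndependent_smul {K V : Type*} [Field K] [AddCommGroup V] [Module K V]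
    (x : V) {c : K} (hc : c ≠ 0) : ¬ LinearIndependent K ![x, c • x] := by
  rw [linearIndependent_fin2]
  simp only [Matrix.cons_val_one, Matrix.cons_val_zero, not_and, not_forall, not_not]
  exact fun _ => ⟨c⁻¹, inv_smul_smul₀ hc x⟩

theorem exists_perm_apply_eq {α β : Type*} {f : α → β} (hf : Injective f) (φ : β ≃ β)
    (hφ : ∀ x, φ x ∈ Set.range f ↔ x ∈ Set.range f) :
    ∃ τ : Perm α, ∀ p, f (τ p) = φ (f p) :=
  ⟨(ofInjective f hf).trans
      ((φ.subtypeEquiv fun x => (hφ x).symm).trans (ofInjective f hf).symm),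
    fun _ => apply_ofInjective_symm hf _⟩

theorem List.Pairwise.exists_adjacent_getD_eq_iff_not_nodup {α : Type*} [LinearOrder α]
    {L : List α} (d : α) (hL : L.Pairwise (· ≥ ·)) :
    (∃ i, 1 ≤ i ∧ i < L.length ∧ L.getD (i - 1) d = L.getD i d) ↔ ¬ L.Nodup := by
  refine ⟨fun ⟨i, hi1, hi, heq⟩ hnd => ?_, fun hnd => by_contra fun hadj => hnd ?_⟩
  · rw [List.getD_eq_getElem _ _ (by omega), List.getD_eq_getElem _ _ hi,
      hnd.getElem_inj_iff] at heq
    omega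
  · push Not at hadj
    refine List.pairwise_iff_getElem.2 fun i j hi hj hij heq => ?_
    have hle : L[i + 1] ≤ L[i] :=
      List.pairwise_iff_getElem.1 hL i (i + 1) hi (by omega) (by omega)
    have hge : L[j] ≤ L[i + 1] := by
      obtain rfl | h := (Nat.succ_le_of_lt hij).eq_or_lt
      · exact le_rfl
      · exact List.pairwise_iff_getElem.1 hL _ _ _ hj h
    refine hadj (i + 1) (by omega) (by omega) ?_
    rw [List.getD_eq_getElem _ _ (by omega), List.getD_eq_getElem _ _ (by omega)]
    simp only [Nat.add_sub_cancel]
    exact le_antisymm (by rwa [heq]) hle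

def conjPart (l : List ℕ) (t : ℕ) : ℕ := (l.filter fun x => t + 1 ≤ x).length

theorem conjList_eq_map_conjPart (l : List ℕ) :
    conjList l = (List.range (l.getD 0 0)).map (conjPart l) := rfl

theorem length_conjList (l : List ℕ) : (conjList l).length = l.getD 0 0 := by
  simp [conjList]

theorem conjPart_antitone (l : List ℕ) : Antitone (conjPart l) := fun _ _ h =>
  List.Sublist.length_le (List.monotone_filter_right l fun x hx => by simp at hx ⊢; omega)

theorem sum_range_conjPart (l : List ℕ) (i : ℕ) :
    ∑ t ∈ range i, conjPart l t = (l.map (min · i)).sum := by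
  induction l with
  | nil => simp [conjPart]
  | cons a l ih =>
    have hcons : ∀ t, conjPart (a :: l) t = (if t + 1 ≤ a then 1 else 0) + conjPart l t := by
      intro t
      simp only [conjPart, List.filter_cons, decide_eq_true_eq]
      split_ifs <;> simp [add_comm]
    have hmin : #{t ∈ range i | t + 1 ≤ a} = min a i := by
      rw [show {t ∈ range i | t + 1 ≤ a} = range (min a i) by ext; simp; omega, card_range]
    simp only [hcons, sum_add_distrib, sum_boole, hmin, ih, List.map_cons, List.sum_cons]
    push_cast
    rfl

theorem sum_filter_conjList_add (l : List ℕ) {k : ℕ} (hk : k ∈ conjList l) :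
    ((conjList l : Multiset ℕ).filter (k < ·)).sum + k =
      (l.map (min · (((conjList l : Multiset ℕ).filter (k < ·)).card + 1))).sum := by
  rw [conjList_eq_map_conjPart, List.mem_map] at hk
  obtain ⟨t₀, ht₀, rfl⟩ := hk
  rw [List.mem_range] at ht₀
  -- The parts of `λ*` exceeding `λ*_{t₀}` are the first `i` of them, and `λ*_i = λ*_{t₀}`.
  have hex : ∃ t, conjPart l t ≤ conjPart l t₀ := ⟨t₀, le_rfl⟩
  set i := Nat.find hex
  have hi : i ≤ t₀ := Nat.find_min' hex le_rfl
  have hfilter : {t ∈ range (l.getD 0 0) | conjPart l t₀ < conjPart l t} = range i := by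
    ext t
    simp only [mem_filter, mem_range]
    refine ⟨fun ⟨_, h⟩ => ?_, fun h => ⟨by omega, not_le.1 (Nat.find_min hex h)⟩⟩
    exact (Nat.lt_find_iff hex t).2 fun m hm hle => absurd (conjPart_antitone l hm) (by omega)
  have hi_part : conjPart l i = conjPart l t₀ :=
    le_antisymm (Nat.find_spec hex) (conjPart_antitone l hi)
  have hM : (conjList l : Multiset ℕ).filter (conjPart l t₀ < ·) =
      (range i).val.map (conjPart l) := by
    rw [← hfilter, conjList_eq_map_conjPart, ← Multiset.map_coe, Multiset.filter_map]
    rfl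
  rw [hM, Multiset.card_map, card_val, card_range, ← sum_range_conjPart, sum_range_succ, hi_part]
  rfl

variable {n : ℕ}

theorem wact_swap_of_eq_s7 {w : Fin n → ℕ} {p q : Fin n} (h : w p = w q) :
    wact (swap p q) w = w := by
  rw [wact, symm_swap, comp_swap_eq_update, h, update_eq_self, ← h, update_eq_self]

def letterCount (w : Fin n → ℕ) (c : ℕ) : ℕ := #{p | w p = c}

theorem multMultiset_eq_map_letterCount (w : Fin n → ℕ) :
    multMultiset w = (univ.image w).val.map (letterCount w) := rfl

theorem letterCount_wact (σ : Perm (Fin n)) (w : Fin n → ℕ) (c : ℕ) :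
    letterCount (wact σ w) c = letterCount w c :=
  card_equiv σ.symm fun p => by simp only [mem_filter_univ]; rfl

theorem nodup_multMultiset_iff (w : Fin n → ℕ) :
    (multMultiset w).Nodup ↔ Set.InjOn (letterCount w) (Set.range w) := by
  rw [multMultiset_eq_map_letterCount, Multiset.nodup_map_iff_inj_on (univ.image w).nodup]
  simp [Set.InjOn]

theorem IsRearr.eq_of_forall_eq_iff {w r r' : Fin n → ℕ} (hr : IsRearr w r) (hr' : IsRearr w r')
    (hw : Set.InjOn (letterCount w) (Set.range w)) (h : ∀ p q, r p = r q ↔ r' p = r' q) :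
    r = r' := by
  obtain ⟨σ, rfl⟩ := hr
  obtain ⟨σ', rfl⟩ := hr'
  funext p
  refine hw ⟨_, rfl⟩ ⟨_, rfl⟩ ?_
  rw [← letterCount_wact σ w, ← letterCount_wact σ' w (wact σ' w p)]
  exact congr_arg card (filter_congr fun q _ => h q p)

theorem letterCount_pos_iff (w : Fin n → ℕ) (c : ℕ) :
    0 < letterCount w c ↔ c ∈ Set.range w := by
  simp [letterCount, card_pos, Finset.Nonempty]

theorem sum_card_row_inter (w1 w2 : Fin n → ℕ) (C : Finset ℕ) :
    ∑ j ∈ univ.image w1, #{p | w2 p ∈ C ∧ w1 p = j} = ∑ x ∈ C, letterCount w2 x := by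
  calc ∑ j ∈ univ.image w1, #{p | w2 p ∈ C ∧ w1 p = j}
      = #{p | w2 p ∈ C} := by
        rw [card_eq_sum_card_fiberwise fun p _ => mem_image_of_mem w1 (mem_univ p)]
        simp only [filter_filter]
    _ = ∑ x ∈ C, letterCount w2 x := by
        rw [card_eq_sum_card_fiberwise (s := {p | w2 p ∈ C}) fun p hp => (mem_filter.1 hp).2]
        refine sum_congr rfl fun x hx => ?_
        rw [filter_filter]
        exact congr_arg card (filter_congr fun p _ => and_iff_right_of_imp fun h => h ▸ hx)

def topColumns (w : Fin n → ℕ) (c : ℕ) : Finset ℕ :=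
  insert c {x ∈ univ.image w | letterCount w c < letterCount w x}

section Words

variable {w1 w2 : Fin n → ℕ} {l : List ℕ}

theorem FreePair.injective (hf : FreePair (w1, w2)) : Injective fun p => (w1 p, w2 p) := by
  intro p q hpq
  obtain ⟨h1, h2⟩ := Prod.mk.inj hpq
  have hswap := hf _ (wact_swap_of_eq_s7 h1) (wact_swap_of_eq_s7 h2)
  simpa using congr($hswap p).symm

theorem FreePair.eq_of_wact_eq (hf : FreePair (w1, w2)) {σ τ : Perm (Fin n)}
    (h1 : wact σ w1 = wact τ w1) (h2 : wact σ w2 = wact τ w2) : σ = τ := by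
  refine inv_injective (Equiv.ext fun p => hf.injective ?_)
  simp only [Prod.mk.injEq]
  exact ⟨congr_fun h1 p, congr_fun h2 p⟩

theorem youngChar_wact (hf : FreePair (w1, w2)) (σ : Perm (Fin n)) :
    youngChar w1 w2 (wact σ w1) (wact σ w2) = sign σ := by
  rw [youngChar, sum_eq_single σ (fun τ _ hτ => if_neg fun h => hτ (hf.eq_of_wact_eq h.1 h.2))
    (by simp)]
  simp

theorem youngChar_ne_zero_iff (hf : FreePair (w1, w2)) (u r : Fin n → ℕ) :
    youngChar w1 w2 u r ≠ 0 ↔ ∃ σ, wact σ w1 = u ∧ wact σ w2 = r := by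
  refine ⟨fun h => ?_, ?_⟩
  · by_contra! hnone
    exact h (sum_eq_zero fun σ _ => if_neg fun h => hnone σ h.1 h.2)
  · rintro ⟨σ, rfl, rfl⟩
    simp [youngChar_wact hf]

theorem youngChar_comp_perm (τ : Perm (Fin n)) (s : Perm ℕ)
    (hτ1 : wact τ w1 = w1) (hτ2 : wact τ w2 = s ∘ w2) (u r : Fin n → ℕ) :
    youngChar w1 w2 u (s ∘ r) = sign τ * youngChar w1 w2 u r := by
  rw [youngChar, youngChar, mul_sum, ← Equiv.sum_comp (Equiv.mulRight τ)]
  refine sum_congr rfl fun σ _ => ?_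
  have h2 : wact (σ * τ) w2 = s ∘ wact σ w2 := by rw [← wact_wact, hτ2]; rfl
  simp only [coe_mulRight, ← wact_wact, hτ1, h2, s.injective.comp_left.eq_iff, Perm.sign_mul]
  split_ifs <;> push_cast <;> ring

theorem spechtCol_apply_ne_zero_iff (hf : FreePair (w1, w2)) (r2 : Rearr w2) (r1 : Rearr w1) :
    spechtCol w1 w2 r2 r1 ≠ 0 ↔ ∃ σ, wact σ w1 = r1 ∧ wact σ w2 = r2 := by
  rw [spechtCol, Int.cast_ne_zero, youngChar_ne_zero_iff hf]

theorem spechtCol_ne_zero (hf : FreePair (w1, w2)) (r2 : Rearr w2) : spechtCol w1 w2 r2 ≠ 0 := by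
  obtain ⟨σ, hσ⟩ := r2.2
  have := (spechtCol_apply_ne_zero_iff hf r2 ⟨wact σ w1, σ, rfl⟩).2 ⟨σ, rfl, hσ⟩
  exact fun h => this (congr_fun h _)

theorem injOn_row (hinj : Injective fun p => (w1 p, w2 p)) (j : ℕ) :
    Set.InjOn w2 {p | w1 p = j} := fun _ hp _ hq h =>
  hinj (Prod.ext (hp.trans hq.symm) h)

theorem card_row_inter_le (hinj : Injective fun p => (w1 p, w2 p)) (C : Finset ℕ) (j : ℕ) :
    #{p | w2 p ∈ C ∧ w1 p = j} ≤ min (letterCount w1 j) #C := by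
  refine le_min (card_le_card fun p => by simp +contextual) ?_
  exact card_le_card_of_injOn w2 (fun p hp => (mem_filter.1 hp).2.1)
    fun _ hp _ hq => injOn_row hinj j (mem_filter.1 hp).2.2 (mem_filter.1 hq).2.2

theorem sum_min_letterCount (hm1 : (l : Multiset ℕ) = multMultiset w1) (i : ℕ) :
    ∑ j ∈ univ.image w1, min (letterCount w1 j) i = (l.map (min · i)).sum := by
  rw [← Multiset.sum_coe, ← Multiset.map_coe, hm1, multMultiset_eq_map_letterCount,
    Multiset.map_map]
  rfl

theorem sum_letterCount_topColumns (hm2 : (conjList l : Multiset ℕ) = multMultiset w2) {c : ℕ}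
    (hc : c ∈ Set.range w2) :
    ∑ x ∈ topColumns w2 c, letterCount w2 x = (l.map (min · #(topColumns w2 c))).sum := by
  set D := {x ∈ univ.image w2 | letterCount w2 c < letterCount w2 x}
  have hcD : c ∉ D := by simp [D]
  have hk : letterCount w2 c ∈ conjList l := by
    obtain ⟨q, rfl⟩ := hc
    rw [← Multiset.mem_coe, hm2, multMultiset_eq_map_letterCount]
    exact Multiset.mem_map_of_mem _ (mem_image_of_mem w2 (mem_univ q))
  have hD : (conjList l : Multiset ℕ).filter (letterCount w2 c < ·) =
      D.val.map (letterCount w2) := by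
    rw [hm2, multMultiset_eq_map_letterCount, Multiset.filter_map]
    rfl
  have := sum_filter_conjList_add l hk
  rw [hD, Multiset.card_map, card_val] at this
  rw [topColumns, sum_insert hcD, card_insert_of_notMem hcD, add_comm, ← this]
  rfl

theorem exists_same_row_of_letterCount_le (hinj : Injective fun p => (w1 p, w2 p))
    (hm1 : (l : Multiset ℕ) = multMultiset w1)
    (hm2 : (conjList l : Multiset ℕ) = multMultiset w2)
    {p₀ : Fin n} {c : ℕ} (hle : letterCount w2 (w2 p₀) ≤ letterCount w2 c) :
    ∃ p, w1 p = w1 p₀ ∧ w2 p = c := by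
  by_cases hc : w2 p₀ = c
  · exact ⟨p₀, rfl, hc⟩
  set C := topColumns w2 c
  have hp₀ : w2 p₀ ∉ C := by simp [C, topColumns, hc]; omega
  have hcw2 : c ∈ Set.range w2 :=
    (letterCount_pos_iff w2 c).1 (((letterCount_pos_iff w2 _).2 ⟨p₀, rfl⟩).trans_le hle)
  -- The columns of `C` hold `∑ⱼ min(λⱼ, #C)` cells, the most that rows of lengths `λⱼ` can
  -- put into `#C` columns, so each row `j` meets exactly `min(λⱼ, #C)` of them.
  have hfull := (sum_eq_sum_iff_of_le fun j _ => card_row_inter_le hinj C j).1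
    ((sum_card_row_inter w1 w2 C).trans
      ((sum_letterCount_topColumns hm2 hcw2).trans (sum_min_letterCount hm1 _).symm))
    (w1 p₀) (mem_image_of_mem _ (mem_univ _))
  set R : Finset (Fin n) := {p | w2 p ∈ C ∧ w1 p = w1 p₀}
  have hrow : #R = #C := by
    have : #R < letterCount w1 (w1 p₀) := by
      refine card_lt_card ⟨fun p => by simp +contextual [R], fun h => hp₀ ?_⟩
      exact (mem_filter.1 (h ((mem_filter_univ _).2 rfl))).2.1
    omega
  have himage : image w2 R = C := by
    refine eq_of_subset_of_card_le (fun x hx => ?_) ?_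
    · obtain ⟨p, hp, rfl⟩ := mem_image.1 hx
      exact (mem_filter.1 hp).2.1
    · rw [card_image_of_injOn fun p hp q hq =>
        injOn_row hinj _ (mem_filter.1 hp).2.2 (mem_filter.1 hq).2.2, hrow]
  obtain ⟨p, hp, hpc⟩ := mem_image.1 (himage ▸ mem_insert_self c _ : c ∈ image w2 R)
  exact ⟨p, (mem_filter.1 hp).2.2, hpc⟩

theorem exists_column_preserving_same_row (hinj : Injective fun p => (w1 p, w2 p))
    (hm1 : (l : Multiset ℕ) = multMultiset w1)
    (hm2 : (conjList l : Multiset ℕ) = multMultiset w2)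
    {p q : Fin n} (h : w2 p ≠ w2 q) :
    ∃ ρ : Perm (Fin n), wact ρ w2 = w2 ∧ wact ρ w1 p = wact ρ w1 q := by
  wlog hle : letterCount w2 (w2 q) ≤ letterCount w2 (w2 p) generalizing p q
  · obtain ⟨ρ, h2, h1⟩ := this h.symm (le_of_not_ge hle)
    exact ⟨ρ, h2, h1.symm⟩
  obtain ⟨x, hx1, hx2⟩ := exists_same_row_of_letterCount_le hinj hm1 hm2 hle
  have hqx : q ≠ x := by rintro rfl; exact h hx2.symm
  have hqp : q ≠ p := by rintro rfl; exact h rfl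
  refine ⟨swap x p, wact_swap_of_eq_s7 hx2, ?_⟩
  simp only [wact, comp_apply, symm_swap, swap_apply_right, swap_apply_of_ne_of_ne hqx hqp, hx1]

theorem IsRearr.eq_iff_forall_wact_ne (hinj : Injective fun p => (w1 p, w2 p))
    (hm1 : (l : Multiset ℕ) = multMultiset w1)
    (hm2 : (conjList l : Multiset ℕ) = multMultiset w2)
    {r : Fin n → ℕ} (hr : IsRearr w2 r) {p q : Fin n} (hpq : p ≠ q) :
    r p = r q ↔ ∀ σ, wact σ w2 = r → wact σ w1 p ≠ wact σ w1 q := by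
  refine ⟨?_, fun h => by_contra fun hne => ?_⟩
  · rintro hr σ rfl h1
    exact hpq (σ.symm.injective (hinj (Prod.ext h1 hr)))
  · obtain ⟨σ, rfl⟩ := hr
    obtain ⟨ρ, hρ2, hρ1⟩ := exists_column_preserving_same_row hinj hm1 hm2 hne
    exact h (σ * ρ) (by rw [← wact_wact, hρ2]) hρ1

theorem exists_perm_wact_eq_swap (hinj : Injective fun p => (w1 p, w2 p))
    (hm1 : (l : Multiset ℕ) = multMultiset w1)
    (hm2 : (conjList l : Multiset ℕ) = multMultiset w2)
    {a b : ℕ} (hab : letterCount w2 a = letterCount w2 b) :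
    ∃ τ : Perm (Fin n), wact τ w1 = w1 ∧ wact τ w2 = swap a b ∘ w2 := by
  have hrow : ∀ {a b}, letterCount w2 a = letterCount w2 b → ∀ j,
      (j, a) ∈ Set.range (fun p => (w1 p, w2 p)) →
        (j, b) ∈ Set.range (fun p => (w1 p, w2 p)) := by
    rintro a b hab j ⟨p, hp⟩
    obtain ⟨rfl, rfl⟩ := Prod.mk.inj hp
    obtain ⟨q, hq1, hq2⟩ := exists_same_row_of_letterCount_le hinj hm1 hm2 hab.le
    exact ⟨q, Prod.ext hq1 hq2⟩
  have hφ : ∀ x, prodCongr (Equiv.refl ℕ) (swap a b) x ∈ Set.range (fun p => (w1 p, w2 p)) ↔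
        x ∈ Set.range (fun p => (w1 p, w2 p)) := by
    rintro ⟨j, c⟩
    simp only [prodCongr_apply, coe_refl, Prod.map_apply, id]
    rcases eq_or_ne c a with rfl | hca
    · rw [swap_apply_left]
      exact ⟨hrow hab.symm j, hrow hab j⟩
    rcases eq_or_ne c b with rfl | hcb
    · rw [swap_apply_right]
      exact ⟨hrow hab j, hrow hab.symm j⟩
    rw [swap_apply_of_ne_of_ne hca hcb]
  obtain ⟨τ, hτ⟩ := exists_perm_apply_eq hinj _ hφ
  exact ⟨τ⁻¹, funext fun p => congr_arg Prod.fst (hτ p),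
    funext fun p => congr_arg Prod.snd (hτ p)⟩

theorem spechtCol_apply_eq_of_support_eq (hf : FreePair (w1, w2))
    (hm1 : (l : Multiset ℕ) = multMultiset w1)
    (hm2 : (conjList l : Multiset ℕ) = multMultiset w2)
    {r r' : Rearr w2} (h : support (spechtCol w1 w2 r) = support (spechtCol w1 w2 r'))
    {p q : Fin n} (hr : r.1 p = r.1 q) : r'.1 p = r'.1 q := by
  obtain rfl | hpq := eq_or_ne p q
  · rfl
  rw [r'.2.eq_iff_forall_wact_ne hf.injective hm1 hm2 hpq]
  intro σ' hσ'
  have hmem : (⟨wact σ' w1, σ', rfl⟩ : Rearr w1) ∈ support (spechtCol w1 w2 r') :=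
    (spechtCol_apply_ne_zero_iff hf _ _).2 ⟨σ', rfl, hσ'⟩
  rw [← h, Function.mem_support, spechtCol_apply_ne_zero_iff hf] at hmem
  obtain ⟨σ, h1, h2⟩ := hmem
  rw [← show wact σ w1 = wact σ' w1 from h1]
  exact (r.2.eq_iff_forall_wact_ne hf.injective hm1 hm2 hpq).1 hr σ h2

theorem eq_of_not_linearIndependent_spechtCol (hf : FreePair (w1, w2))
    (hm1 : (l : Multiset ℕ) = multMultiset w1)
    (hm2 : (conjList l : Multiset ℕ) = multMultiset w2)
    (hw2 : Set.InjOn (letterCount w2) (Set.range w2)) {r r' : Rearr w2}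
    (h : ¬ LinearIndependent ℂ ![spechtCol w1 w2 r, spechtCol w1 w2 r']) : r = r' := by
  have hsupp := support_eq_of_not_linearIndependent (spechtCol_ne_zero hf r)
    (spechtCol_ne_zero hf r') h
  exact Subtype.ext (r.2.eq_of_forall_eq_iff r'.2 hw2 fun p q =>
    ⟨spechtCol_apply_eq_of_support_eq hf hm1 hm2 hsupp,
      spechtCol_apply_eq_of_support_eq hf hm1 hm2 hsupp.symm⟩)

theorem exists_not_linearIndependent_spechtCol (hf : FreePair (w1, w2))
    (hm1 : (l : Multiset ℕ) = multMultiset w1)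
    (hm2 : (conjList l : Multiset ℕ) = multMultiset w2)
    (hw2 : ¬ Set.InjOn (letterCount w2) (Set.range w2)) :
    ∃ r r' : Rearr w2, r ≠ r' ∧
      ¬ LinearIndependent ℂ ![spechtCol w1 w2 r, spechtCol w1 w2 r'] := by
  obtain ⟨_, ⟨p, rfl⟩, _, ⟨q, rfl⟩, hcount, hne⟩ : ∃ a ∈ Set.range w2, ∃ b ∈ Set.range w2,
      letterCount w2 a = letterCount w2 b ∧ a ≠ b := by
    simpa [Set.InjOn] using hw2
  obtain ⟨τ, hτ1, hτ2⟩ := exists_perm_wact_eq_swap hf.injective hm1 hm2 hcount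
  refine ⟨⟨w2, 1, rfl⟩, ⟨swap (w2 p) (w2 q) ∘ w2, τ, hτ2⟩, fun h => hne ?_, ?_⟩
  · simpa using congr_fun (congr_arg Subtype.val h) p
  · have hcol : spechtCol w1 w2 ⟨swap (w2 p) (w2 q) ∘ w2, τ, hτ2⟩ =
        ((sign τ : ℤ) : ℂ) • spechtCol w1 w2 ⟨w2, 1, rfl⟩ := funext fun r1 => by
      simp [spechtCol, youngChar_comp_perm τ _ hτ1 hτ2]
    rw [hcol]
    exact not_linearIndependent_smul _ (by simp)

end Words

theorem specht_stmt_7_general {n : ℕ} (l : List ℕ)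
    (w1 w2 : Fin n → ℕ) (hc : Complementary w1 w2) (hcorr : CorrespondsTo w1 w2 l) :
    (∀ r2 : Rearr w2, spechtCol w1 w2 r2 ≠ 0) ∧
    ((∃ r r' : Rearr w2, r ≠ r' ∧
        ¬ LinearIndependent ℂ ![spechtCol w1 w2 r, spechtCol w1 w2 r']) ↔
      ∃ i : ℕ, 1 ≤ i ∧ i < l.getD 0 0 ∧
        (conjList l).getD (i - 1) 0 = (conjList l).getD i 0) := by
  obtain ⟨-, hf⟩ := hc
  obtain ⟨⟨-, hm1⟩, hsort, hm2⟩ := hcorr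
  refine ⟨spechtCol_ne_zero hf, ?_⟩
  rw [← length_conjList, hsort.1.exists_adjacent_getD_eq_iff_not_nodup 0, ← Multiset.coe_nodup,
    hm2, nodup_multMultiset_iff]
  exact ⟨fun ⟨r, r', hne, hdep⟩ hw2 =>
      hne (eq_of_not_linearIndependent_spechtCol hf hm1 hm2 hw2 hdep),
    exists_not_linearIndependent_spechtCol hf hm1 hm2⟩

/-- Every column of the Specht matrix is nonzero, and two distinct
columns are linearly dependent (a two-element circuit of the Specht matroid `M(λ)`)
if and only if the diagram of `λ` has two columns of the same size, i.e.
`μ_i = μ_{i+1}` for some `1 ≤ i < λ_1`, where `μ = λ*`. -/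
theorem specht_stmt_7 {n : ℕ} (l : List ℕ) (hl : SortedPartList l) (hsum : l.sum = n)
    (w1 w2 : Fin n → ℕ) (hc : Complementary w1 w2) (hcorr : CorrespondsTo w1 w2 l) :
    (∀ r2 : Rearr w2, spechtCol w1 w2 r2 ≠ 0) ∧
    ((∃ r r' : Rearr w2, r ≠ r' ∧
        ¬ LinearIndependent ℂ ![spechtCol w1 w2 r, spechtCol w1 w2 r']) ↔
      ∃ i : ℕ, 1 ≤ i ∧ i < l.getD 0 0 ∧
        (conjList l).getD (i - 1) 0 = (conjList l).getD i 0) :=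
  specht_stmt_7_general l w1 w2 hc hcorr
end
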